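/- For each n ∈ {2, 3, 4}, the bound of Theorem 1 is saturated: there exists a 2⊗n density matrix ρ (positive semidefinite, trace 1, indexed by Fin 2 × Fin n) whose partial transpose ρ^{T_A} has exactly n − 1 negative eigenvalues, counted with multiplicity. -/

import Mathlib

/-!
Each witness `ρ` is given with a factorization `ρ = L D Lᴴ`, `D` diagonal with nonnegative
entries, which certifies `ρ ≥ 0`. Its partial transpose `σ` satisfies `(σ - a)(σ - b) = 0` for
some `a < 0 ≤ b`, so every eigenvalue of `σ` is `a` or `b`. Since `tr σ = tr ρ = 1`, the number `k`
of eigenvalues equal to `a` is forced by `k a + (2n - k) b = 1`, which gives `k = n - 1`.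
-/

open Matrix
open scoped ComplexOrder

noncomputable section

/-- Partial transpose with respect to the first (qubit) factor. -/
def ptA {n : ℕ} (ρ : Matrix (Fin 2 × Fin n) (Fin 2 × Fin n) ℂ) :
    Matrix (Fin 2 × Fin n) (Fin 2 × Fin n) ℂ :=
  fun p q => ρ (q.1, p.2) (p.1, q.2)

theorem card_filter_neg_eq_of_sum_eq {ι : Type*} [Fintype ι] {f : ι → ℝ} {a b : ℝ}
    (ha : a < 0) (hb : 0 ≤ b) (hf : ∀ i, f i = a ∨ f i = b) {k : ℕ}
    (hsum : ∑ i, f i = k * a + (Fintype.card ι - k) * b) :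
    (Finset.univ.filter fun i => f i < 0).card = k := by
  set N := (Finset.univ.filter fun i => f i < 0).card
  have hf_ite : ∀ i, f i = if f i < 0 then a else b := fun i => by
    rcases hf i with h | h <;> simp only [h, ha, hb.not_gt, if_true, if_false]
  have hsplit : ∑ i, f i = N * a + (Fintype.card ι - N) * b := by
    rw [Finset.sum_congr rfl fun i _ => hf_ite i, Finset.sum_ite, Finset.sum_const,
      Finset.sum_const, nsmul_eq_mul, nsmul_eq_mul, ← Finset.card_univ (α := ι),
      ← Finset.card_filter_add_card_filter_not (s := Finset.univ) (fun i => f i < 0)]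
    push_cast
    ring
  have h : ((N : ℝ) - k) * (a - b) = 0 := by linear_combination hsplit.symm.trans hsum
  have hab : a - b ≠ 0 := by linarith
  exact_mod_cast sub_eq_zero.mp ((mul_eq_zero.mp h).resolve_right hab)

namespace Matrix

variable {ι m 𝕜 : Type*} [Fintype ι] [Fintype m] [DecidableEq ι] [RCLike 𝕜]

theorem posSemidef_mul_diagonal_mul_conjTranspose (L : Matrix m ι 𝕜) {d : ι → ℝ} (hd : 0 ≤ d) :
    (L * diagonal (fun i => (d i : 𝕜)) * Lᴴ).PosSemidef :=
  (posSemidef_diagonal_iff.mpr fun i => RCLike.ofReal_nonneg.mpr (hd i)).mul_mul_conjTranspose_same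
    L

namespace IsHermitian

variable {A : Matrix ι ι 𝕜}

theorem eigenvalues_eq_or_eq_of_mul_eq_zero (hA : A.IsHermitian) {a b : ℝ}
    (hab : (A - (a : 𝕜) • 1) * (A - (b : 𝕜) • 1) = 0) (i : ι) :
    hA.eigenvalues i = a ∨ hA.eigenvalues i = b := by
  set v := ⇑(hA.eigenvectorBasis i)
  have hv : v ≠ 0 := (WithLp.ofLp_eq_zero 2).ne.2 <| hA.eigenvectorBasis.orthonormal.ne_zero i
  have hshift : ∀ c : ℝ, (A - (c : 𝕜) • 1) *ᵥ v = ((hA.eigenvalues i - c : ℝ) : 𝕜) • v := by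
    intro c
    rw [sub_mulVec, hA.mulVec_eigenvectorBasis, smul_mulVec, one_mulVec, RCLike.ofReal_sub,
      sub_smul, RCLike.real_smul_eq_coe_smul (K := 𝕜)]
  have h := congrArg (· *ᵥ v) hab
  simp only [← mulVec_mulVec, hshift, mulVec_smul, smul_smul, zero_mulVec, smul_eq_zero, hv,
    or_false, ← RCLike.ofReal_mul, RCLike.ofReal_eq_zero, mul_eq_zero, sub_eq_zero] at h
  exact h.symm

theorem card_filter_eigenvalues_neg_eq (hA : A.IsHermitian) {a b : ℝ} (ha : a < 0) (hb : 0 ≤ b)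
    (hab : (A - (a : 𝕜) • 1) * (A - (b : 𝕜) • 1) = 0) {k : ℕ}
    (htr : A.trace = ((k * a + (Fintype.card ι - k) * b : ℝ) : 𝕜)) :
    (Finset.univ.filter fun i => hA.eigenvalues i < 0).card = k := by
  refine card_filter_neg_eq_of_sum_eq ha hb (hA.eigenvalues_eq_or_eq_of_mul_eq_zero hab) ?_
  rw [← RCLike.ofReal_inj (K := 𝕜), RCLike.ofReal_sum, ← hA.trace_eq_sum_eigenvalues, htr]

end IsHermitian

end Matrix

section PartialTranspose

variable {n : ℕ} {ρ : Matrix (Fin 2 × Fin n) (Fin 2 × Fin n) ℂ}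

theorem trace_ptA (ρ : Matrix (Fin 2 × Fin n) (Fin 2 × Fin n) ℂ) : (ptA ρ).trace = ρ.trace := rfl

theorem Matrix.IsHermitian.ptA (hρ : ρ.IsHermitian) : (ptA ρ).IsHermitian :=
  IsHermitian.ext fun p q => hρ.apply (q.1, p.2) (p.1, q.2)

theorem exists_state_of_ptA_mul_eq_zero (hρ : ρ.PosSemidef) (htr : ρ.trace = 1) {a b : ℝ}
    (ha : a < 0) (hb : 0 ≤ b) (hab : (ptA ρ - (a : ℂ) • 1) * (ptA ρ - (b : ℂ) • 1) = 0) {k : ℕ}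
    (hk : k * a + (2 * n - k) * b = 1) :
    ∃ ρ : Matrix (Fin 2 × Fin n) (Fin 2 × Fin n) ℂ, ρ.PosSemidef ∧ ρ.trace = 1 ∧
      ∃ hH : (ptA ρ).IsHermitian, (Finset.univ.filter fun i => hH.eigenvalues i < 0).card = k := by
  refine ⟨ρ, hρ, htr, hρ.isHermitian.ptA,
    hρ.isHermitian.ptA.card_filter_eigenvalues_neg_eq ha hb hab ?_⟩
  rw [trace_ptA, htr, Fintype.card_prod, Fintype.card_fin, Fintype.card_fin, Nat.cast_mul,
    Nat.cast_ofNat, hk, RCLike.ofReal_one]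

end PartialTranspose

def blockMatrix {n : ℕ} {R : Type*} (A B C D : Matrix (Fin n) (Fin n) R) :
    Matrix (Fin 2 × Fin n) (Fin 2 × Fin n) R :=
  of fun p q => ![![A, B], ![C, D]] p.1 q.1 p.2 q.2

def state₂ : Matrix (Fin 2 × Fin 2) (Fin 2 × Fin 2) ℂ :=
  blockMatrix !![0, 0; 0, 1/2] !![0, 0; 1/2, 0] !![0, 1/2; 0, 0] !![1/2, 0; 0, 0]

def ldlFactor₂ : Matrix (Fin 2 × Fin 2) (Fin 2 × Fin 2) ℂ :=
  blockMatrix 1 0 !![0, 1; 0, 0] 1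

def ldlWeight₂ : Fin 2 × Fin 2 → ℝ := fun p => ![![0, 1/2], ![0, 0]] p.1 p.2

theorem state₂_eq_ldl :
    state₂ = ldlFactor₂ * diagonal (fun p => (ldlWeight₂ p : ℂ)) * ldlFactor₂ᴴ := by
  ext ⟨i, k⟩ ⟨j, l⟩
  fin_cases i <;> fin_cases j <;> fin_cases k <;> fin_cases l <;>
    simp [state₂, ldlFactor₂, ldlWeight₂, blockMatrix, mul_apply, Fintype.sum_prod_type,
      Fin.sum_univ_succ, conjTranspose_apply, diagonal_apply, one_apply]

theorem posSemidef_state₂ : state₂.PosSemidef := by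
  rw [state₂_eq_ldl]
  refine posSemidef_mul_diagonal_mul_conjTranspose (d := ldlWeight₂) _ ?_
  rintro ⟨i, k⟩
  fin_cases i <;> fin_cases k <;> norm_num [ldlWeight₂]

theorem trace_state₂ : state₂.trace = 1 := by
  simp [trace, Fintype.sum_prod_type, Fin.sum_univ_succ, state₂, blockMatrix]
  norm_num

theorem ptA_state₂_quadratic :
    (ptA state₂ - ((-(1/2) : ℝ) : ℂ) • 1) * (ptA state₂ - ((1/2 : ℝ) : ℂ) • 1) = 0 := by
  ext ⟨i, k⟩ ⟨j, l⟩
  fin_cases i <;> fin_cases j <;> fin_cases k <;> fin_cases l <;>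
    simp [state₂, ptA, blockMatrix, mul_apply, Fintype.sum_prod_type, Fin.sum_univ_succ,
      one_apply]

def state₃ : Matrix (Fin 2 × Fin 3) (Fin 2 × Fin 3) ℂ :=
  blockMatrix !![0, 0, 0; 0, 3/14, 0; 0, 0, 4/14] !![0, 0, 0; 2/14, 0, 0; 0, 2/14, 0]
    !![0, 2/14, 0; 0, 0, 2/14; 0, 0, 0] !![4/14, 0, 0; 0, 3/14, 0; 0, 0, 0]

def ldlFactor₃ : Matrix (Fin 2 × Fin 3) (Fin 2 × Fin 3) ℂ :=
  blockMatrix 1 0 !![0, 2/3, 0; 0, 0, 1/2; 0, 0, 0] 1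

def ldlWeight₃ : Fin 2 × Fin 3 → ℝ := fun p => ![![0, 3/14, 2/7], ![4/21, 1/7, 0]] p.1 p.2

theorem state₃_eq_ldl :
    state₃ = ldlFactor₃ * diagonal (fun p => (ldlWeight₃ p : ℂ)) * ldlFactor₃ᴴ := by
  ext ⟨i, k⟩ ⟨j, l⟩
  fin_cases i <;> fin_cases j <;> fin_cases k <;> fin_cases l <;>
    simp [state₃, ldlFactor₃, ldlWeight₃, blockMatrix, mul_apply, Fintype.sum_prod_type,
      Fin.sum_univ_succ, conjTranspose_apply, diagonal_apply, one_apply, map_div₀, map_inv₀,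
      map_ofNat] <;> norm_num

theorem posSemidef_state₃ : state₃.PosSemidef := by
  rw [state₃_eq_ldl]
  refine posSemidef_mul_diagonal_mul_conjTranspose (d := ldlWeight₃) _ ?_
  rintro ⟨i, k⟩
  fin_cases i <;> fin_cases k <;> norm_num [ldlWeight₃]

theorem trace_state₃ : state₃.trace = 1 := by
  simp [trace, Fintype.sum_prod_type, Fin.sum_univ_succ, state₃, blockMatrix]
  norm_num

theorem ptA_state₃_quadratic :
    (ptA state₃ - ((-(1/14) : ℝ) : ℂ) • 1) * (ptA state₃ - ((2/7 : ℝ) : ℂ) • 1) = 0 := by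
  ext ⟨i, k⟩ ⟨j, l⟩
  fin_cases i <;> fin_cases j <;> fin_cases k <;> fin_cases l <;>
    simp [state₃, ptA, blockMatrix, mul_apply, Fintype.sum_prod_type, Fin.sum_univ_succ,
      one_apply] <;> norm_num

def state₄ : Matrix (Fin 2 × Fin 4) (Fin 2 × Fin 4) ℂ :=
  blockMatrix !![0, 0, 0, 0; 0, 3/34, 0, 0; 0, 0, 6/34, 0; 0, 0, 0, 8/34]
    !![0, 0, 0, 0; 4/34, 0, 0, 0; 0, 5/34, 0, 0; 0, 0, 4/34, 0]
    !![0, 4/34, 0, 0; 0, 0, 5/34, 0; 0, 0, 0, 4/34; 0, 0, 0, 0]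
    !![8/34, 0, 0, 0; 0, 6/34, 0, 0; 0, 0, 3/34, 0; 0, 0, 0, 0]

def ldlFactor₄ : Matrix (Fin 2 × Fin 4) (Fin 2 × Fin 4) ℂ :=
  blockMatrix 1 0 !![0, 4/3, 0, 0; 0, 0, 5/6, 0; 0, 0, 0, 1/2; 0, 0, 0, 0] 1

def ldlWeight₄ : Fin 2 × Fin 4 → ℝ :=
  fun p => ![![0, 3/34, 3/17, 4/17], ![4/51, 11/204, 1/34, 0]] p.1 p.2

set_option maxHeartbeats 800000 in
theorem state₄_eq_ldl :
    state₄ = ldlFactor₄ * diagonal (fun p => (ldlWeight₄ p : ℂ)) * ldlFactor₄ᴴ := by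
  ext ⟨i, k⟩ ⟨j, l⟩
  fin_cases i <;> fin_cases j <;> fin_cases k <;> fin_cases l <;>
    simp [state₄, ldlFactor₄, ldlWeight₄, blockMatrix, mul_apply, Fintype.sum_prod_type,
      Fin.sum_univ_succ, conjTranspose_apply, diagonal_apply, one_apply, map_div₀, map_inv₀,
      map_ofNat] <;> norm_num

theorem posSemidef_state₄ : state₄.PosSemidef := by
  rw [state₄_eq_ldl]
  refine posSemidef_mul_diagonal_mul_conjTranspose (d := ldlWeight₄) _ ?_
  rintro ⟨i, k⟩
  fin_cases i <;> fin_cases k <;> norm_num [ldlWeight₄]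

theorem trace_state₄ : state₄.trace = 1 := by
  simp [trace, Fintype.sum_prod_type, Fin.sum_univ_succ, state₄, blockMatrix]
  norm_num

theorem ptA_state₄_quadratic :
    (ptA state₄ - ((-(1/17) : ℝ) : ℂ) • 1) * (ptA state₄ - ((4/17 : ℝ) : ℂ) • 1) = 0 := by
  ext ⟨i, k⟩ ⟨j, l⟩
  fin_cases i <;> fin_cases j <;> fin_cases k <;> fin_cases l <;>
    simp [state₄, ptA, blockMatrix, mul_apply, Fintype.sum_prod_type, Fin.sum_univ_succ,
      one_apply] <;> norm_num

/-- For `n ∈ {2, 3, 4}` there is a `2 ⊗ n` density matrix whose partial transpose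
has exactly `n - 1` negative eigenvalues (with multiplicity). -/
theorem exists_state_saturating_bound :
    ∀ n ∈ ({2, 3, 4} : Set ℕ),
      ∃ ρ : Matrix (Fin 2 × Fin n) (Fin 2 × Fin n) ℂ,
        ρ.PosSemidef ∧ ρ.trace = 1 ∧
          ∃ hH : (ptA ρ).IsHermitian,
            (Finset.univ.filter fun i => hH.eigenvalues i < 0).card = n - 1 := by
  rintro n (rfl | rfl | rfl)
  · exact exists_state_of_ptA_mul_eq_zero posSemidef_state₂ trace_state₂ (by norm_num) (by norm_num)
      ptA_state₂_quadratic (by norm_num)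
  · exact exists_state_of_ptA_mul_eq_zero posSemidef_state₃ trace_state₃ (by norm_num) (by norm_num)
      ptA_state₃_quadratic (by norm_num)
  · exact exists_state_of_ptA_mul_eq_zero posSemidef_state₄ trace_state₄ (by norm_num) (by norm_num)
      ptA_state₄_quadratic (by norm_num)
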